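/- Let X be a variety, 𝔸¹_X = X × 𝔸¹ with the 𝔾_m-action on the second factor, and let L be a 𝔾_m-linearized line bundle on 𝔸¹_X such that 𝔾_m acts trivially on L restricted to X × {0}. Then L is 𝔾_m-equivariantly isomorphic to the pullback of a line bundle on X via the projection 𝔸¹_X → X. -/

import Mathlib

open Polynomial TensorProduct DirectSum

/-! The map `R[X] ⊗_R M₀ → M`, `p ⊗ m ↦ p • m`, is the required isomorphism. Since `X` raises
degrees by one, the degree-`(d + 1)` component of `X • w` is `X` times the degree-`d` component of
`w`; so the triviality hypothesis upgrades to homogeneous division, `M_{d+1} = X • M_d` for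
`d ≠ -1`. Hence `M_d = X^d • M₀` for `d ≥ 0`, which gives surjectivity, while for `d < 0` every
element of `M_d` is divisible by all powers of `X`, hence zero because projective `R[X]`-modules
are `X`-adically separated. Injectivity holds because `X` is a nonzerodivisor on the flat module
`M` and the summands `X^d • m_d` of an image lie in distinct degrees. -/

theorem Polynomial.eq_zero_of_forall_X_pow_dvd {R : Type*} [Semiring R] {p : R[X]}
    (h : ∀ k : ℕ, X ^ k ∣ p) : p = 0 := by
  ext i
  simpa using X_pow_dvd_iff.mp (h (i + 1)) i i.lt_succ_self

section Projective

variable {R M : Type*} [Semiring R] [AddCommMonoid M] [Module R[X] M] [Module.Projective R[X] M]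

theorem Module.Projective.eq_zero_of_forall_eq_X_pow_smul {m : M}
    (h : ∀ k : ℕ, ∃ m' : M, m = (X : R[X]) ^ k • m') : m = 0 := by
  obtain ⟨s, hs⟩ := Module.projective_def.mp ‹Module.Projective R[X] M›
  apply hs.injective
  refine Finsupp.ext fun a ↦ ?_
  rw [map_zero, Finsupp.zero_apply]
  refine Polynomial.eq_zero_of_forall_X_pow_dvd fun k ↦ ?_
  obtain ⟨m', rfl⟩ := h k
  exact ⟨s m' a, by simp⟩

end Projective

namespace DirectSum

variable {A M σ : Type*} [Monoid A] [AddCommMonoid M] [DistribMulAction A M]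
  [SetLike σ M] (𝓜 : ℤ → σ) {a : A}

theorem pow_smul_mem_of_smul_mem_add_one (ha : ∀ i, ∀ m ∈ 𝓜 i, a • m ∈ 𝓜 (i + 1))
    (k : ℕ) {i : ℤ} {m : M} (hm : m ∈ 𝓜 i) : a ^ k • m ∈ 𝓜 (i + k) := by
  induction k with
  | zero => simpa using hm
  | succ k ih =>
    rw [pow_succ', mul_smul, Nat.cast_succ, ← add_assoc]
    exact ha _ _ ih

theorem exists_mem_zero_eq_pow_smul
    (hdiv : ∀ d, d + 1 ≠ 0 → ∀ m ∈ 𝓜 (d + 1), ∃ m' ∈ 𝓜 d, m = a • m')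
    (k : ℕ) {m : M} (hm : m ∈ 𝓜 k) : ∃ m₀ ∈ 𝓜 0, m = a ^ k • m₀ := by
  induction k generalizing m with
  | zero => exact ⟨m, by simpa using hm, by simp⟩
  | succ k ih =>
    obtain ⟨m', hm', rfl⟩ := hdiv k (by omega) m (by simpa using hm)
    obtain ⟨m₀, hm₀, rfl⟩ := ih hm'
    exact ⟨m₀, hm₀, by rw [smul_smul, ← pow_succ']⟩

theorem exists_mem_sub_eq_pow_smul_of_neg
    (hdiv : ∀ d, d + 1 ≠ 0 → ∀ m ∈ 𝓜 (d + 1), ∃ m' ∈ 𝓜 d, m = a • m')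
    {d : ℤ} (hd : d < 0) {m : M} (hm : m ∈ 𝓜 d) (k : ℕ) : ∃ m' ∈ 𝓜 (d - k), m = a ^ k • m' := by
  induction k with
  | zero => exact ⟨m, by simpa using hm, by simp⟩
  | succ k ih =>
    obtain ⟨m', hm', rfl⟩ := ih
    obtain ⟨m'', hm'', rfl⟩ := hdiv (d - (k + 1)) (by omega) m' (by convert hm' using 2; ring)
    exact ⟨m'', by simpa using hm'', by rw [smul_smul, ← pow_succ]⟩

variable [AddSubmonoidClass σ M] [Decomposition 𝓜]

theorem coe_decompose_smul_add_one (ha : ∀ i, ∀ m ∈ 𝓜 i, a • m ∈ 𝓜 (i + 1))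
    (w : M) (d : ℤ) : (decompose 𝓜 (a • w) (d + 1) : M) = a • (decompose 𝓜 w d : M) := by
  induction w using Decomposition.inductionOn 𝓜 with
  | zero => simp
  | @homogeneous i m =>
    have ham := ha i m m.2
    rcases eq_or_ne i d with rfl | hid
    · rw [decompose_of_mem_same 𝓜 ham, decompose_coe, of_eq_same]
    · rw [decompose_of_mem_ne 𝓜 ham (by simpa using hid), decompose_of_mem_ne 𝓜 m.2 hid,
        smul_zero]
  | add w w' hw hw' => simp [smul_add, decompose_add, hw, hw']

theorem exists_mem_eq_smul_of_mem_add_one (ha : ∀ i, ∀ m ∈ 𝓜 i, a • m ∈ 𝓜 (i + 1))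
    {d : ℤ} {m : M} (hm : m ∈ 𝓜 (d + 1)) (hdvd : ∃ w, m = a • w) :
    ∃ m' ∈ 𝓜 d, m = a • m' := by
  obtain ⟨w, rfl⟩ := hdvd
  exact ⟨decompose 𝓜 w d, (decompose 𝓜 w d).2,
    by rw [← coe_decompose_smul_add_one 𝓜 ha, decompose_of_mem_same 𝓜 hm]⟩

theorem coe_decompose_sum_pow_smul (ha : ∀ i, ∀ m ∈ 𝓜 i, a • m ∈ 𝓜 (i + 1))
    (μ : ℕ →₀ 𝓜 0) (e : ℕ) :
    (decompose 𝓜 (μ.sum fun d m ↦ a ^ d • (m : M)) e : M) = a ^ e • (μ e : M) := by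
  have hmem (d : ℕ) : a ^ d • (μ d : M) ∈ 𝓜 d := by
    simpa using pow_smul_mem_of_smul_mem_add_one 𝓜 ha d (μ d).2
  rw [Finsupp.sum, decompose_sum, DFinsupp.finsetSum_apply, AddSubmonoidClass.coe_finsetSum]
  refine (Finset.sum_eq_single e (fun d _ hde ↦ ?_) (fun he ↦ ?_)).trans ?_
  · exact decompose_of_mem_ne 𝓜 (hmem d) (by exact_mod_cast hde)
  · rw [Finsupp.notMem_support_iff.mp he, ZeroMemClass.coe_zero, smul_zero, decompose_zero]
    rfl
  · exact decompose_of_mem_same 𝓜 (hmem e)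

end DirectSum

section LiftBaseChange

variable {R M : Type*} [CommRing R] [AddCommGroup M] [Module R[X] M] [Module R M]
  [IsScalarTower R R[X] M] (𝓜 : ℤ → Submodule R M) [Decomposition 𝓜]

theorem injective_liftBaseChange_subtype_zero [Module.Flat R[X] M]
    (hX : ∀ d, ∀ m ∈ 𝓜 d, (X : R[X]) • m ∈ 𝓜 (d + 1)) :
    Function.Injective ((𝓜 0).subtype.liftBaseChange R[X]) := by
  classical
  refine (injective_iff_map_eq_zero _).mpr fun x hx ↦ ?_
  obtain ⟨μ, rfl⟩ := TensorProduct.eq_repr_basis_left (basisMonomials R) x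
  have hφ : (𝓜 0).subtype.liftBaseChange R[X] (μ.sum fun d m ↦ basisMonomials R d ⊗ₜ m) =
      μ.sum fun d m ↦ (X : R[X]) ^ d • (m : M) := by
    simp [Finsupp.sum, monomial_one_right_eq_X_pow]
  have hμ : μ = 0 := by
    ext e
    have hXe : (X : R[X]) ^ e • (μ e : M) = 0 := by
      rw [← coe_decompose_sum_pow_smul 𝓜 hX, ← hφ, hx, decompose_zero]
      rfl
    exact Module.Flat.isSMulRegular_of_isRegular (isRegular_X_pow e) (by simpa using hXe)
  simp [hμ]

theorem surjective_liftBaseChange_subtype_zero [Module.Projective R[X] M]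
    (hdiv : ∀ d, d + 1 ≠ 0 → ∀ m ∈ 𝓜 (d + 1), ∃ m' ∈ 𝓜 d, m = (X : R[X]) • m') :
    Function.Surjective ((𝓜 0).subtype.liftBaseChange R[X]) := by
  refine fun m ↦ Decomposition.inductionOn 𝓜 (motive := (· ∈ LinearMap.range _))
    (zero_mem _) (fun {d} m ↦ ?_) (fun _ _ ↦ add_mem) m
  rcases lt_or_ge d 0 with hd | hd
  · rw [Module.Projective.eq_zero_of_forall_eq_X_pow_smul fun k ↦
      (exists_mem_sub_eq_pow_smul_of_neg 𝓜 hdiv hd m.2 k).imp fun _ ↦ And.right]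
    exact zero_mem _
  · lift d to ℕ using hd
    obtain ⟨m₀, hm₀, hm⟩ := exists_mem_zero_eq_pow_smul 𝓜 hdiv d m.2
    exact ⟨((X : R[X]) ^ d) ⊗ₜ[R] ⟨m₀, hm₀⟩, hm.symm⟩

end LiftBaseChange

theorem gm_linearized_bundle_descends_general
    (R : Type*) [CommRing R] (M : Type*) [AddCommGroup M]
    [Module (Polynomial R) M] [Module R M] [IsScalarTower R (Polynomial R) M]
    (hproj : Module.Projective (Polynomial R) M)
    (grading : ℤ → Submodule R M) [DirectSum.Decomposition grading]
    (hcompat : ∀ d : ℤ, ∀ m ∈ grading d,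
      (Polynomial.X : Polynomial R) • m ∈ grading (d + 1))
    (htriv : ∀ d : ℤ, d ≠ 0 → ∀ m ∈ grading d,
      ∃ m' : M, m = (Polynomial.X : Polynomial R) • m') :
    ∃ e : (TensorProduct R (Polynomial R) ↥(grading 0)) ≃ₗ[Polynomial R] M,
      ∀ (d : ℕ) (m : grading 0),
        e ((Polynomial.X ^ d : Polynomial R) ⊗ₜ[R] m) ∈ grading (d : ℤ) := by
  have hdiv (d : ℤ) (hd : d + 1 ≠ 0) (m : M) (hm : m ∈ grading (d + 1)) :
      ∃ m' ∈ grading d, m = (X : R[X]) • m' :=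
    exists_mem_eq_smul_of_mem_add_one grading hcompat hm (htriv _ hd m hm)
  have := hproj
  refine ⟨.ofBijective _ ⟨injective_liftBaseChange_subtype_zero grading hcompat,
    surjective_liftBaseChange_subtype_zero grading hdiv⟩, fun d m ↦ ?_⟩
  show (X : R[X]) ^ d • (m : M) ∈ grading d
  simpa using pow_smul_mem_of_smul_mem_add_one grading hcompat d m.2

/-- algebraic model, over an affine chart `X = Spec R`.
A line bundle on `𝔸¹_X` is a finite projective `R[t]`-module `M` of rank one;
a `𝔾_m`-linearization of `M` (for the scaling action on the `𝔸¹`-factor) is a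
`ℤ`-grading `M = ⊕_d M_d` by `R`-submodules, compatible with the grading of
`R[t]` in which `t` has degree `1` (`hcompat`).  Triviality of the `𝔾_m`-action
on `L|_{X × {0}}`, i.e. on `M / tM`, says that every homogeneous element of
nonzero degree is divisible by `t` (`htriv`).  Conclusion: `M` is
`𝔾_m`-equivariantly the pullback of a line bundle on `X`, namely
`M ≅ R[t] ⊗_R M_0` as `R[t]`-modules, with `t^d ⊗ M_0` landing in degree `d`. -/
theorem gm_linearized_bundle_descends
    (R : Type*) [CommRing R] (M : Type*) [AddCommGroup M]
    [Module (Polynomial R) M] [Module R M] [IsScalarTower R (Polynomial R) M]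
    (hproj : Module.Projective (Polynomial R) M)
    (hfin : Module.Finite (Polynomial R) M)
    (hrank : ∀ p : PrimeSpectrum (Polynomial R),
      Module.finrank (Localization.AtPrime p.asIdeal)
        (LocalizedModule p.asIdeal.primeCompl M) = 1)
    (grading : ℤ → Submodule R M) [DirectSum.Decomposition grading]
    (hcompat : ∀ d : ℤ, ∀ m ∈ grading d,
      (Polynomial.X : Polynomial R) • m ∈ grading (d + 1))
    (htriv : ∀ d : ℤ, d ≠ 0 → ∀ m ∈ grading d,
      ∃ m' : M, m = (Polynomial.X : Polynomial R) • m') :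
    ∃ e : (TensorProduct R (Polynomial R) ↥(grading 0)) ≃ₗ[Polynomial R] M,
      ∀ (d : ℕ) (m : grading 0),
        e ((Polynomial.X ^ d : Polynomial R) ⊗ₜ[R] m) ∈ grading (d : ℤ) :=
  gm_linearized_bundle_descends_general R M hproj grading hcompat htriv
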